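/- arXiv:2506.12022 — 2 statements merged into one kernel-verified Lean document; each statement's English description precedes it below -/
import Mathlib

section
/- Every boolean matrix M ∈ {0,1}^{N×N} satisfies signrank(M) ≤ 1 + suprank(M)². -/
open Matrix

/-- The support-rank of a boolean matrix: the minimum rank of a real matrix with
the same support. -/
noncomputable def suprank {I J : Type*} [Fintype J] (M : Matrix I J Bool) : ℕ :=
  sInf {r : ℕ | ∃ A : Matrix I J ℝ, A.rank = r ∧
    ∀ i j, A i j = 0 ↔ M i j = false}

/-- The sign-rank of a boolean matrix: the minimum rank of a real matrix that is
positive on the 1-entries and negative on the 0-entries. -/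
noncomputable def signrank {I J : Type*} [Fintype J] (M : Matrix I J Bool) : ℕ :=
  sInf {r : ℕ | ∃ A : Matrix I J ℝ, A.rank = r ∧
    ∀ i j, (M i j = true → 0 < A i j) ∧ (M i j = false → A i j < 0)}

/-!
Take `A` of rank `suprank M` with the support of `M`, and `ε > 0` below every nonzero `A i j ^ 2`.
Then `A ⊙ A - ε · 𝟙` is positive exactly on the support of `M` and negative elsewhere. Its rank
is at most `1 + rank (A ⊙ A)`, and the columns of `A ⊙ A` lie in the span of the pairwise
products of a basis of the column space of `A`, so `rank (A ⊙ A) ≤ (rank A) ^ 2`.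
-/

open Module Filter Topology Pointwise

theorem Submodule.finrank_mul_le {K S : Type*} [Field K] [CommRing S] [Algebra K S]
    (V W : Submodule K S) [FiniteDimensional K V] [FiniteDimensional K W] :
    finrank K ↥(V * W) ≤ finrank K V * finrank K W := by
  let bV := finBasis K V
  let bW := finBasis K W
  let f : Fin (finrank K V) × Fin (finrank K W) → S := fun p => bV p.1 * bW p.2
  have hle : V * W ≤ span K (Set.range f) := by
    rw [← congr_arg₂ (· * ·) ((V.span_val_image_eq_iff _).2 bV.span_eq)
      ((W.span_val_image_eq_iff _).2 bW.span_eq), Submodule.span_mul_span]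
    refine Submodule.span_mono ?_
    rintro _ ⟨_, ⟨_, ⟨i, rfl⟩, rfl⟩, _, ⟨_, ⟨j, rfl⟩, rfl⟩, rfl⟩
    exact ⟨(i, j), rfl⟩
  have := FiniteDimensional.span_of_finite K (Set.finite_range f)
  calc finrank K ↥(V * W) ≤ finrank K ↥(span K (Set.range f)) := Submodule.finrank_mono hle
    _ ≤ Fintype.card (Fin (finrank K V) × Fin (finrank K W)) := finrank_range_le_card f
    _ = finrank K V * finrank K W := by simp

theorem Matrix.rank_hadamard_le {m n K : Type*} [Fintype n] [Field K] (A B : Matrix m n K) :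
    (A ⊙ B).rank ≤ A.rank * B.rank := by
  simp only [rank_eq_finrank_span_cols]
  set V := Submodule.span K (Set.range A.col)
  set W := Submodule.span K (Set.range B.col)
  have hV : V.FG := Submodule.fg_span (Set.finite_range _)
  have hW : W.FG := Submodule.fg_span (Set.finite_range _)
  have := Module.Finite.iff_fg.2 hV
  have := Module.Finite.iff_fg.2 hW
  have := Module.Finite.iff_fg.2 (hV.mul hW)
  refine (Submodule.finrank_mono ?_).trans (Submodule.finrank_mul_le V W)
  rw [Submodule.span_le]
  rintro _ ⟨j, rfl⟩
  exact Submodule.mul_mem_mul (Submodule.subset_span ⟨j, rfl⟩) (Submodule.subset_span ⟨j, rfl⟩)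

theorem Matrix.rank_add_le {m n K : Type*} [Finite m] [Fintype n] [Field K] (A B : Matrix m n K) :
    (A + B).rank ≤ A.rank + B.rank := by
  rw [rank, rank, rank, mulVecLin_add]
  exact (Submodule.finrank_mono (LinearMap.range_add_le _ _)).trans
    (Submodule.finrank_add_le_finrank_add_finrank _ _)

theorem exists_pos_forall_lt_of_pos {ι : Type*} [Finite ι] (g : ι → ℝ) :
    ∃ ε > 0, ∀ i, 0 < g i → ε < g i := by
  have : ∀ᶠ ε in 𝓝[>] (0 : ℝ), 0 < ε ∧ ∀ i, 0 < g i → ε < g i :=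
    Filter.Eventually.and self_mem_nhdsWithin <| eventually_all.2 fun i => by
      by_cases hi : 0 < g i
      · exact ((eventually_lt_nhds hi).filter_mono nhdsWithin_le_nhds).mono fun _ h _ => h
      · exact .of_forall fun _ h => absurd h hi
  exact this.exists

theorem exists_rank_eq_suprank {I J : Type*} [Fintype J] (M : Matrix I J Bool) :
    ∃ A : Matrix I J ℝ, A.rank = suprank M ∧ ∀ i j, A i j = 0 ↔ M i j = false :=
  Nat.sInf_mem (s := {r | ∃ A : Matrix I J ℝ, A.rank = r ∧ ∀ i j, A i j = 0 ↔ M i j = false})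
    ⟨_, of fun i j => if M i j then 1 else 0, rfl, fun i j => by cases h : M i j <;> simp [h]⟩

theorem signrank_le_rank {I J : Type*} [Fintype J] {M : Matrix I J Bool} (A : Matrix I J ℝ)
    (hpos : ∀ i j, M i j = true → 0 < A i j) (hneg : ∀ i j, M i j = false → A i j < 0) :
    signrank M ≤ A.rank :=
  Nat.sInf_le ⟨A, rfl, fun i j => ⟨hpos i j, hneg i j⟩⟩

theorem signrank_le_one_add_suprank_sq {I J : Type*} [Finite I] [Fintype J]
    (M : Matrix I J Bool) : signrank M ≤ 1 + suprank M ^ 2 := by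
  obtain ⟨A, hA_rank, hA_supp⟩ := exists_rank_eq_suprank M
  obtain ⟨ε, hε, hε_lt⟩ := exists_pos_forall_lt_of_pos fun p : I × J => A p.1 p.2 * A p.1 p.2
  let B : Matrix I J ℝ := vecMulVec (fun _ => -ε) (fun _ => 1) + A ⊙ A
  have hB : ∀ i j, B i j = A i j * A i j - ε := fun i j => by
    simp only [B, Matrix.add_apply, vecMulVec_apply, hadamard_apply]; ring
  calc signrank M ≤ B.rank := by
        refine signrank_le_rank B (fun i j hij => ?_) (fun i j hij => ?_) <;> rw [hB]
        · have := hε_lt (i, j) (mul_self_pos.2 fun h => by simp [(hA_supp i j).1 h] at hij)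
          linarith
        · simpa [(hA_supp i j).2 hij] using hε
    _ ≤ 1 + A.rank * A.rank := (rank_add_le _ _).trans
        (add_le_add (rank_vecMulVec_le _ _) (rank_hadamard_le A A))
    _ = 1 + suprank M ^ 2 := by rw [hA_rank, sq]

theorem stmt4 (N : ℕ) (M : Matrix (Fin N) (Fin N) Bool) :
    signrank M ≤ 1 + suprank M ^ 2 :=
  signrank_le_one_add_suprank_sq M
end

section
/- (Rank Compression) Let ℳ be a finite set of real a×b matrices and let a', b' ∈ ℕ. Then there exists a linear map Π : ℝ^{a×b} → ℝ^{a'×b'} such that for every M ∈ ℳ, rank(Π(M)) = min(rank(M), a', b'). -/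
/-!
Take `Π M = A * M * B` for one well-chosen pair of matrices `A : a' × a` and `B : b × b'`. The rank
of `A * M * B` never exceeds `r = min (rank M) (min a' b')`, and it attains `r` as soon as a fixed
`r × r` minor of `A * M * B` is nonzero. That minor is a polynomial in the entries of `A` and `B`;
it is not the zero polynomial, because factoring `M` through its image gives `A`, `B` making the
minor the identity. A finite product of nonzero polynomials over the infinite field `ℝ` does not
vanish identically, so one pair `(A, B)` works for all of `ℳ`.
-/

open Matrix MvPolynomial Module

variable {K : Type*} [Field K]

theorem LinearMap.exists_comp_comp_eq_id_of_card_le_finrank_range {V W ι : Type*}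
    [AddCommGroup V] [Module K V] [AddCommGroup W] [Module K W] [Fintype ι]
    (f : V →ₗ[K] W) (hι : Fintype.card ι ≤ finrank K (range f)) :
    ∃ (g : (ι → K) →ₗ[K] V) (h : W →ₗ[K] (ι → K)), h ∘ₗ f ∘ₗ g = LinearMap.id := by
  obtain ⟨w, hw⟩ := exists_linearIndependent_of_le_finrank hι
  replace hw := (hw.comp _ (Fintype.equivFin ι).injective).map' _ (range f).ker_subtype
  choose v hv using fun i => LinearMap.mem_range.mp (w (Fintype.equivFin ι i)).2
  have hfv : f ∘ₗ Fintype.linearCombination K v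
      = Fintype.linearCombination K (fun i => (w (Fintype.equivFin ι i) : W)) :=
    LinearMap.ext fun c => by simp [Fintype.linearCombination_apply, hv]
  obtain ⟨h, hh⟩ := LinearMap.exists_leftInverse_of_injective (f ∘ₗ Fintype.linearCombination K v)
    (by rw [hfv, LinearMap.ker_eq_bot]; exact hw.fintypeLinearCombination_injective)
  exact ⟨_, h, hh⟩

theorem MvPolynomial.exists_forall_eval_ne_zero {R σ ι : Type*} [CommRing R] [IsDomain R]
    [Infinite R] (s : Finset ι) (p : ι → MvPolynomial σ R) (hp : ∀ i ∈ s, p i ≠ 0) :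
    ∃ x, ∀ i ∈ s, eval x (p i) ≠ 0 := by
  have hprod : ∏ i ∈ s, p i ≠ 0 := Finset.prod_ne_zero_iff.mpr hp
  obtain ⟨x, hx⟩ : ∃ x, eval x (∏ i ∈ s, p i) ≠ 0 := by
    by_contra! h
    exact hprod (MvPolynomial.funext fun x => by simpa using h x)
  exact ⟨x, Finset.prod_ne_zero_iff.mp (by rwa [map_prod] at hx)⟩

namespace Matrix

variable {m n m' n' ι : Type*} [Fintype n]

theorem card_le_rank_of_det_submatrix_ne_zero [Fintype ι] [DecidableEq ι] (X : Matrix m n K)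
    {e : ι → m} {f : ι → n} (h : (X.submatrix e f).det ≠ 0) : Fintype.card ι ≤ X.rank :=
  (rank_of_isUnit _ ((isUnit_iff_isUnit_det _).mpr h.isUnit)).symm.le.trans
    (rank_submatrix_le X e f)

variable [Fintype m]

theorem rank_mul_mul_le_min [Fintype m'] [Fintype n'] (A : Matrix m' m K) (M : Matrix m n K)
    (B : Matrix n n' K) :
    (A * M * B).rank ≤ min M.rank (min (Fintype.card m') (Fintype.card n')) :=
  le_min ((rank_mul_le_left _ _).trans (rank_mul_le_right _ _))
    (le_min (rank_le_card_height _) (rank_le_card_width _))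

variable [Fintype ι] [DecidableEq ι]

theorem exists_mul_mul_eq_one_of_card_le_rank (M : Matrix m n K)
    (hι : Fintype.card ι ≤ M.rank) : ∃ (H : Matrix ι m K) (G : Matrix n ι K), H * M * G = 1 := by
  classical
  obtain ⟨g, h, hfg⟩ := (toLin' M).exists_comp_comp_eq_id_of_card_le_finrank_range hι
  refine ⟨LinearMap.toMatrix' h, LinearMap.toMatrix' g, ?_⟩
  rw [← LinearMap.toMatrix'_toLin' M, Matrix.mul_assoc, ← LinearMap.toMatrix'_comp,
    ← LinearMap.toMatrix'_comp, hfg, LinearMap.toMatrix'_id]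

theorem exists_submatrix_mul_mul_eq_one (M : Matrix m n K) {e : ι → m'}
    {f : ι → n'} (he : e.Injective) (hf : f.Injective) (hι : Fintype.card ι ≤ M.rank) :
    ∃ (A : Matrix m' m K) (B : Matrix n n' K), (A * M * B).submatrix e f = 1 := by
  obtain ⟨H, G, hHG⟩ := M.exists_mul_mul_eq_one_of_card_le_rank hι
  let A : Matrix m' m K := of fun i => Function.extend e (fun k => H k) 0 i
  let B : Matrix n n' K := of fun j => Function.extend f (fun k => G j k) 0
  have hA : A.submatrix e id = H := by ext; simp [A, he.extend_apply]
  have hB : B.submatrix id f = G := by ext; simp [B, hf.extend_apply]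
  refine ⟨A, B, ?_⟩
  rw [submatrix_mul _ _ _ id _ Function.bijective_id,
    submatrix_mul _ _ _ id _ Function.bijective_id, hA, hB, submatrix_id_id, hHG]

noncomputable def genericMinor (M : Matrix m n K) (e : ι → m') (f : ι → n') :
    MvPolynomial ((m' × m) ⊕ (n × n')) K :=
  (((mvPolynomialX m' m K).map (rename (Sum.inl (β := n × n'))) *
    M.map (C (σ := (m' × m) ⊕ (n × n'))) *
    (mvPolynomialX n n' K).map (rename (Sum.inr (α := m' × m)))).submatrix e f).det

theorem eval_genericMinor (M : Matrix m n K) (e : ι → m') (f : ι → n') (A : Matrix m' m K)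
    (B : Matrix n n' K) :
    eval (Sum.elim (Function.uncurry A) (Function.uncurry B)) (genericMinor M e f)
      = ((A * M * B).submatrix e f).det := by
  rw [genericMinor, RingHom.map_det, RingHom.mapMatrix_apply, ← submatrix_map, Matrix.map_mul,
    Matrix.map_mul]
  congr 4 <;> ext <;> simp [Function.uncurry]

theorem genericMinor_ne_zero (M : Matrix m n K) {e : ι → m'} {f : ι → n'}
    (he : e.Injective) (hf : f.Injective) (hι : Fintype.card ι ≤ M.rank) :
    genericMinor M e f ≠ 0 := by
  obtain ⟨A, B, hAB⟩ := M.exists_submatrix_mul_mul_eq_one he hf hι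
  intro h
  have := eval_genericMinor M e f A B
  rw [h, map_zero, hAB, det_one] at this
  exact zero_ne_one this

theorem exists_forall_rank_mul_mul_eq_min [Infinite K] [Fintype m'] [Fintype n']
    (s : Finset (Matrix m n K)) :
    ∃ (A : Matrix m' m K) (B : Matrix n n' K),
      ∀ M ∈ s, (A * M * B).rank = min M.rank (min (Fintype.card m') (Fintype.card n')) := by
  set r := fun M : Matrix m n K => min M.rank (min (Fintype.card m') (Fintype.card n'))
  have e M : Fin (r M) ↪ m' :=
    Classical.choice (Function.Embedding.nonempty_of_card_le (by simp [r]))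
  have f M : Fin (r M) ↪ n' :=
    Classical.choice (Function.Embedding.nonempty_of_card_le (by simp [r]))
  obtain ⟨x, hx⟩ := MvPolynomial.exists_forall_eval_ne_zero s
    (fun M => genericMinor M (e M) (f M))
    (fun M _ => genericMinor_ne_zero M (e M).injective (f M).injective (by simp [r]))
  let A : Matrix m' m K := fun i j => x (Sum.inl (i, j))
  let B : Matrix n n' K := fun i j => x (Sum.inr (i, j))
  have hx_eq : Sum.elim (Function.uncurry A) (Function.uncurry B) = x := by
    ext (_ | _) <;> rfl
  refine ⟨A, B, fun M hM => (rank_mul_mul_le_min A M B).antisymm ?_⟩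
  have hdet := hx M hM
  rw [← hx_eq, eval_genericMinor] at hdet
  simpa [r] using card_le_rank_of_det_submatrix_ne_zero _ hdet

end Matrix

theorem stmt6 (a b a' b' : ℕ) (ℳ : Finset (Matrix (Fin a) (Fin b) ℝ)) :
    ∃ L : Matrix (Fin a) (Fin b) ℝ →ₗ[ℝ] Matrix (Fin a') (Fin b') ℝ,
      ∀ M ∈ ℳ, (L M).rank = min M.rank (min a' b') := by
  obtain ⟨A, B, hAB⟩ := exists_forall_rank_mul_mul_eq_min (m' := Fin a') (n' := Fin b') ℳ
  refine ⟨mulRightLinearMap _ ℝ B ∘ₗ mulLeftLinearMap _ ℝ A, fun M hM => ?_⟩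
  simpa using hAB M hM
end
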